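/- Let θ_1 ≤ λ_1 ≤ λ_2 ≤ θ_2 be positive reals with λ_1+λ_2 = θ_1+θ_2, and let 0 < a ≤ θ_1/λ_2 and b ≥ 0. Define V(x) = F̄_Y(x) - F̄_X(ax+b). Then V changes sign at most once on [0,∞), and the sign pattern is '+' followed by '−': there exists t ∈ [0,∞] with V(x) ≥ 0 for 0 ≤ x < t and V(x) ≤ 0 for x > t, with V(0) > 0 when b > 0. -/

import Mathlib

/-!
Multiplying `V` by `exp ((θ₁ + θ₂) x)` turns it into an exponential sum `g` whose derivative has
nonnegative coefficients at rates `θ₁, θ₂, (1 - a)(θ₁ + θ₂)` and nonpositive ones at the larger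
rates `θ₁ + θ₂ - a λᵢ`. Comparing every term with `exp (c x)` for a separating rate `c` shows that
once `g' ≤ 0` it stays so (a one-sign-change case of Descartes' rule for exponential sums). As
`g 0 = V 0 ≥ 0`, the mean value theorem then shows that once `g`, hence `V`, is negative it stays
negative, which is the single sign change `+ → −`.
-/

open Real Set

section ExpSum

variable {ι : Type*} [Fintype ι]

noncomputable def expSum (q γ : ι → ℝ) (y : ℝ) : ℝ := ∑ i, q i * exp (γ i * y)

theorem hasDerivAt_expSum (q γ : ι → ℝ) (y : ℝ) :
    HasDerivAt (expSum q γ) (expSum (fun i => q i * γ i) γ y) y := by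
  have hterm : ∀ i, HasDerivAt (fun y => q i * exp (γ i * y)) (q i * γ i * exp (γ i * y)) y :=
    fun i => ((((hasDerivAt_id y).const_mul (γ i)).exp).const_mul (q i)).congr_deriv <| by
      simp only [id, mul_one]; ring
  exact HasDerivAt.fun_sum fun i _ => hterm i

theorem expSum_le_exp_mul_expSum {r γ : ι → ℝ} {c : ℝ} (hc : ∀ i, (γ i - c) * r i ≤ 0)
    {u v : ℝ} (huv : u ≤ v) : expSum r γ v ≤ exp (c * (v - u)) * expSum r γ u := by
  rw [expSum, expSum, Finset.mul_sum]
  refine Finset.sum_le_sum fun i _ => ?_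
  have hsplit : exp (γ i * v) = exp (γ i * u) * exp (γ i * (v - u)) := by
    rw [← exp_add]; ring_nf
  have hd : 0 ≤ v - u := sub_nonneg.2 huv
  have key : r i * (exp (γ i * (v - u)) - exp (c * (v - u))) ≤ 0 := by
    rcases lt_trichotomy (r i) 0 with hr | hr | hr
    · exact mul_nonpos_of_nonpos_of_nonneg hr.le <| sub_nonneg.2 <| exp_le_exp.2 <|
        mul_le_mul_of_nonneg_right (by nlinarith [hc i]) hd
    · simp [hr]
    · exact mul_nonpos_of_nonneg_of_nonpos hr.le <| sub_nonpos.2 <| exp_le_exp.2 <|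
        mul_le_mul_of_nonneg_right (by nlinarith [hc i]) hd
  rw [hsplit]
  linarith [mul_nonpos_of_nonneg_of_nonpos (exp_pos (γ i * u)).le key]

theorem expSum_nonpos_of_le {r γ : ι → ℝ} {c : ℝ} (hc : ∀ i, (γ i - c) * r i ≤ 0)
    {u v : ℝ} (huv : u ≤ v) (hu : expSum r γ u ≤ 0) : expSum r γ v ≤ 0 :=
  (expSum_le_exp_mul_expSum hc huv).trans (mul_nonpos_of_nonneg_of_nonpos (exp_pos _).le hu)

end ExpSum

theorem lt_zero_of_deriv_nonpos_persistent {g g' : ℝ → ℝ} (hg : ∀ y, HasDerivAt g (g' y) y)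
    (hg' : ∀ u v, u ≤ v → g' u ≤ 0 → g' v ≤ 0) {x₀ x₁ y : ℝ} (h₀ : 0 ≤ g x₀) (hx : x₀ ≤ x₁)
    (h₁ : g x₁ < 0) (hy : x₁ ≤ y) : g y < 0 := by
  have hx' : x₀ < x₁ := hx.lt_of_ne (by rintro rfl; linarith)
  obtain ⟨w, hw, hslope⟩ := exists_hasDerivAt_eq_slope g g' hx'
    (fun z _ => (hg z).continuousAt.continuousWithinAt) (fun z _ => hg z)
  have hw' : g' w ≤ 0 := by
    rw [hslope]; exact div_nonpos_of_nonpos_of_nonneg (by linarith) (by linarith)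
  have hanti : AntitoneOn g (Ici w) :=
    antitoneOn_of_hasDerivWithinAt_nonpos (convex_Ici w)
      (fun z _ => (hg z).continuousAt.continuousWithinAt)
      (fun z _ => (hg z).hasDerivWithinAt)
      (fun z hz => hg' w z (by simpa using (interior_subset hz : z ∈ Ici w)) hw')
  exact (hanti (mem_Ici.2 hw.2.le) (mem_Ici.2 (hw.2.le.trans hy)) hy).trans_lt h₁

theorem nonneg_or_exists_sign_change_of_neg_persistent {V : ℝ → ℝ}
    (hV : ∀ x y, 0 ≤ x → x ≤ y → V x < 0 → V y < 0) :
    (∀ x, 0 ≤ x → 0 ≤ V x) ∨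
      ∃ t, 0 ≤ t ∧ ∀ x, 0 ≤ x → (x < t → 0 ≤ V x) ∧ (t < x → V x ≤ 0) := by
  by_cases hall : ∀ x, 0 ≤ x → 0 ≤ V x
  · exact Or.inl hall
  push Not at hall
  set S := {x | 0 ≤ x ∧ V x < 0}
  have hS : S.Nonempty := hall
  have hSbdd : BddBelow S := ⟨0, fun x hx => hx.1⟩
  refine Or.inr ⟨sInf S, le_csInf hS fun x hx => hx.1, fun x hx => ⟨fun hxt => ?_, fun htx => ?_⟩⟩
  · by_contra! hneg
    exact (csInf_le hSbdd ⟨hx, hneg⟩).not_gt hxt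
  · obtain ⟨y, ⟨hy0, hyneg⟩, hyx⟩ := exists_lt_of_csInf_lt hS htx
    exact (hV y x hy0 hyx.le hyneg).le

/-- The survival function of the maximum of independent exponentials with rates `l₁`, `l₂`. -/
noncomputable def maxExpSurvival (l₁ l₂ x : ℝ) : ℝ :=
  exp (-l₁ * x) + exp (-l₂ * x) - exp (-(l₁ + l₂) * x)

theorem one_sub_maxExpSurvival (l₁ l₂ x : ℝ) :
    1 - maxExpSurvival l₁ l₂ x = (1 - exp (-l₁ * x)) * (1 - exp (-l₂ * x)) := by
  rw [maxExpSurvival, show -(l₁ + l₂) * x = -l₁ * x + -l₂ * x by ring, exp_add]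
  ring

theorem maxExpSurvival_zero (l₁ l₂ : ℝ) : maxExpSurvival l₁ l₂ 0 = 1 := by
  simp [maxExpSurvival]

theorem one_sub_exp_neg_mul_nonneg {l x : ℝ} (hl : 0 ≤ l) (hx : 0 ≤ x) : 0 ≤ 1 - exp (-l * x) :=
  sub_nonneg.2 (exp_le_one_iff.2 (by nlinarith))

theorem one_sub_exp_neg_mul_pos {l x : ℝ} (hl : 0 < l) (hx : 0 < x) : 0 < 1 - exp (-l * x) :=
  sub_pos.2 (exp_lt_one_iff.2 (by nlinarith))

theorem exp_mul_maxExpSurvival_sub_eq_expSum (θ₁ θ₂ l₁ l₂ a b y : ℝ) :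
    exp ((θ₁ + θ₂) * y) * (maxExpSurvival θ₁ θ₂ y - maxExpSurvival l₁ l₂ (a * y + b)) =
      expSum ![1, 1, -1, -exp (-l₁ * b), -exp (-l₂ * b), exp (-(l₁ + l₂) * b)]
        ![θ₂, θ₁, 0, θ₁ + θ₂ - a * l₁, θ₁ + θ₂ - a * l₂, θ₁ + θ₂ - a * (l₁ + l₂)] y := by
  simp only [expSum, maxExpSurvival, Fin.sum_univ_succ, Fin.sum_univ_zero, Fin.isValue,
    Fin.succ_zero_eq_one, Fin.succ_one_eq_two, Fin.reduceSucc, Matrix.cons_val_zero,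
    Matrix.cons_val_one, Matrix.cons_val, neg_mul, one_mul, zero_mul, add_zero, mul_sub,
    mul_add, ← exp_add]
  ring_nf

theorem maxExpSurvival_sub_comp_neg_persistent {θ₁ θ₂ l₁ l₂ a b : ℝ} (hθ₁ : 0 < θ₁)
    (h₁ : θ₁ ≤ l₁) (h₂ : l₁ ≤ l₂) (h₃ : l₂ ≤ θ₂) (ha₀ : 0 ≤ a) (ha : a * l₂ ≤ θ₁) (hb : 0 ≤ b)
    {x y : ℝ} (hx : 0 ≤ x) (hxy : x ≤ y)
    (hneg : maxExpSurvival θ₁ θ₂ x - maxExpSurvival l₁ l₂ (a * x + b) < 0) :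
    maxExpSurvival θ₁ θ₂ y - maxExpSurvival l₁ l₂ (a * y + b) < 0 := by
  set D := fun y => maxExpSurvival θ₁ θ₂ y - maxExpSurvival l₁ l₂ (a * y + b)
  set q : Fin 6 → ℝ := ![1, 1, -1, -exp (-l₁ * b), -exp (-l₂ * b), exp (-(l₁ + l₂) * b)]
  set γ : Fin 6 → ℝ :=
    ![θ₂, θ₁, 0, θ₁ + θ₂ - a * l₁, θ₁ + θ₂ - a * l₂, θ₁ + θ₂ - a * (l₁ + l₂)]
  have hfac (y : ℝ) : expSum q γ y = exp ((θ₁ + θ₂) * y) * D y :=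
    (exp_mul_maxExpSurvival_sub_eq_expSum θ₁ θ₂ l₁ l₂ a b y).symm
  -- Positive coefficients of the derivative sit at rates below `θ₁ + θ₂ - a * l₂`,
  -- negative ones above.
  have hsign : ∀ i, (γ i - (θ₁ + θ₂ - a * l₂)) * (q i * γ i) ≤ 0 := by
    have : a * l₁ ≤ a * l₂ := mul_le_mul_of_nonneg_left h₂ ha₀
    have : 0 ≤ a * l₁ := mul_nonneg ha₀ (by linarith)
    have : a * (l₁ + l₂) = a * l₁ + a * l₂ := mul_add a l₁ l₂
    have hθ₂ : 0 < θ₂ := by linarith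
    intro i
    fin_cases i <;> simp only [q, γ, Fin.zero_eta, Fin.mk_one, Fin.reduceFinMk, Fin.isValue,
      Matrix.cons_val_zero, Matrix.cons_val_one, Matrix.cons_val, one_mul, mul_zero, sub_self,
      zero_mul, le_refl]
    · exact mul_nonpos_of_nonpos_of_nonneg (by linarith) hθ₂.le
    · exact mul_nonpos_of_nonpos_of_nonneg (by linarith) hθ₁.le
    · rw [neg_mul, mul_neg, neg_nonpos]
      exact mul_nonneg (by linarith) (mul_nonneg (exp_pos _).le (by linarith))
    · exact mul_nonpos_of_nonpos_of_nonneg (by linarith) (mul_nonneg (exp_pos _).le (by linarith))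
  have hD0 : 0 ≤ D 0 := by
    simp only [D, mul_zero, zero_add, maxExpSurvival_zero, one_sub_maxExpSurvival]
    exact mul_nonneg (one_sub_exp_neg_mul_nonneg (by linarith) hb)
      (one_sub_exp_neg_mul_nonneg (by linarith) hb)
  have := lt_zero_of_deriv_nonpos_persistent (hasDerivAt_expSum q γ)
    (fun u v huv hu => expSum_nonpos_of_le hsign huv hu) (x₀ := 0) (x₁ := x) (y := y)
    (by rw [hfac]; exact mul_nonneg (exp_pos _).le hD0) hx
    (by rw [hfac]; exact mul_neg_of_pos_of_neg (exp_pos _) hneg) hxy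
  rw [hfac] at this
  exact neg_of_mul_neg_right this (exp_pos _).le

theorem stmt_18_general (θ₁ θ₂ lam₁ lam₂ a b : ℝ) (h0 : 0 < θ₁) (h1 : θ₁ ≤ lam₁) (h2 : lam₁ ≤ lam₂)
    (h3 : lam₂ ≤ θ₂) (ha0 : 0 < a) (ha : a ≤ θ₁ / lam₂)
    (hb : 0 ≤ b)
    (V : ℝ → ℝ)
    (hV : ∀ x, V x = (exp (-θ₁ * x) + exp (-θ₂ * x) - exp (-(θ₁ + θ₂) * x)) -
      (exp (-lam₁ * (a * x + b)) + exp (-lam₂ * (a * x + b)) -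
        exp (-(lam₁ + lam₂) * (a * x + b)))) :
    ((∀ x : ℝ, 0 ≤ x → 0 ≤ V x) ∨
      ∃ t : ℝ, 0 ≤ t ∧ ∀ x : ℝ, 0 ≤ x → (x < t → 0 ≤ V x) ∧ (t < x → V x ≤ 0)) ∧
    (0 < b → 0 < V 0) := by
  have hV' (x : ℝ) : V x = maxExpSurvival θ₁ θ₂ x - maxExpSurvival lam₁ lam₂ (a * x + b) := hV x
  have hal : a * lam₂ ≤ θ₁ := (le_div_iff₀ (by linarith)).1 ha
  refine ⟨nonneg_or_exists_sign_change_of_neg_persistent fun x y hx hxy hneg => ?_, fun hb' => ?_⟩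
  · rw [hV'] at hneg ⊢
    exact maxExpSurvival_sub_comp_neg_persistent h0 h1 h2 h3 ha0.le hal hb hx hxy hneg
  · rw [hV', mul_zero, zero_add, maxExpSurvival_zero, one_sub_maxExpSurvival]
    exact mul_pos (one_sub_exp_neg_mul_pos (by linarith) hb')
      (one_sub_exp_neg_mul_pos (by linarith) hb')

theorem stmt_18 (θ₁ θ₂ lam₁ lam₂ a b : ℝ) (h0 : 0 < θ₁) (h1 : θ₁ ≤ lam₁) (h2 : lam₁ ≤ lam₂)
    (h3 : lam₂ ≤ θ₂) (hsum : lam₁ + lam₂ = θ₁ + θ₂) (ha0 : 0 < a) (ha : a ≤ θ₁ / lam₂)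
    (hθlam : θ₁ / lam₂ < 1) (hb : 0 ≤ b)
    (V : ℝ → ℝ)
    (hV : ∀ x, V x = (exp (-θ₁ * x) + exp (-θ₂ * x) - exp (-(θ₁ + θ₂) * x)) -
      (exp (-lam₁ * (a * x + b)) + exp (-lam₂ * (a * x + b)) -
        exp (-(lam₁ + lam₂) * (a * x + b)))) :
    ((∀ x : ℝ, 0 ≤ x → 0 ≤ V x) ∨
      ∃ t : ℝ, 0 ≤ t ∧ ∀ x : ℝ, 0 ≤ x → (x < t → 0 ≤ V x) ∧ (t < x → V x ≤ 0)) ∧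
    (0 < b → 0 < V 0) :=
  stmt_18_general θ₁ θ₂ lam₁ lam₂ a b h0 h1 h2 h3 ha0 ha hb V hV
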